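/- arXiv:1005.1721 — 3 statements merged into one kernel-verified Lean document; each statement's English description precedes it below -/
import Mathlib

section
/- A median graph G with at least three vertices is 2-connected if and only if the incompatibility graph Inc(G) of its convex splits is connected. -/
open SimpleGraph

/-- The metric interval between `u` and `v` in a graph `G`. -/
def gInterval {V : Type} (G : SimpleGraph V) (u v : V) : Set V :=
  {z | G.dist u z + G.dist z v = G.dist u v}

/-- `G` is a median graph: it is connected and every triple of vertices has a
unique median. -/
def IsMedianGraph {V : Type} (G : SimpleGraph V) : Prop :=
  G.Connected ∧ ∀ u v w : V,
    ∃! m : V, m ∈ gInterval G u v ∧ m ∈ gInterval G v w ∧ m ∈ gInterval G u w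

/-- A set of vertices is convex if it contains the interval between any two of
its elements. -/
def IsConvexSet {V : Type} (G : SimpleGraph V) (S : Set V) : Prop :=
  ∀ u ∈ S, ∀ v ∈ S, gInterval G u v ⊆ S

/-- A convex split of `G` is an unordered pair `{A, B}` of nonempty convex sets
partitioning the vertex set. -/
def IsConvexSplit {V : Type} (G : SimpleGraph V) (P : Set (Set V)) : Prop :=
  ∃ A B : Set V, P = {A, B} ∧ A.Nonempty ∧ B.Nonempty ∧
    IsConvexSet G A ∧ IsConvexSet G B ∧ A ∪ B = Set.univ ∧ Disjoint A B

/-- Two splits are incompatible when all four pairwise intersections of their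
parts are nonempty. -/
def SplitsIncompatible {V : Type} (P Q : Set (Set V)) : Prop :=
  ∀ A ∈ P, ∀ B ∈ Q, (A ∩ B : Set V).Nonempty

/-- The incompatibility graph of the convex splits of `G`. -/
def IncGraph {V : Type} (G : SimpleGraph V) :
    SimpleGraph {P : Set (Set V) // IsConvexSplit G P} :=
  SimpleGraph.fromRel (fun P Q => SplitsIncompatible P.1 Q.1)

/-- A graph (with at least three vertices) is 2-connected if it is connected
and remains connected after deletion of any single vertex. -/
def TwoConnected {V : Type} (G : SimpleGraph V) : Prop :=
  G.Connected ∧ ∀ v : V, (G.induce {u | u ≠ v}).Connected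

/-!
Every convex split of a median graph is the pair of halfspaces `{W_ab, W_ba}` of any edge `ab`
crossing it, and the splits of the two edges `xy`, `xz` of a square `x y w z` are incompatible.
If `G - x` is connected, follow a path from `y` to `z` in `G - x` and attach to each of its
vertices `u` the neighbours of `x` on geodesics from `x` to `u`. Two such neighbours `n₁`, `n₂`
of the same `u` span a square with the median of `n₁`, `n₂`, `u`, and the sets attached to
adjacent vertices are nested; so the splits of all edges at `x` lie in one component of `Inc(G)`,
and walking through `G` spreads this to all edges.

Conversely, let `v` be a cut vertex. A convex set avoiding `v` lies in one component of `G - v`,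
and the `v`-free parts of two incompatible splits meet, so the component met by the `v`-free part
is constant on components of `Inc(G)`. It differs for the splits of edges `vc`, `vc'` with `c`,
`c'` in different components of `G - v`.
-/

section Interval

variable {V : Type} {G : SimpleGraph V}

lemma gInterval_comm (u v : V) : gInterval G u v = gInterval G v u := by
  ext z
  simp only [gInterval, Set.mem_ofPred_eq, dist_comm (u := z), dist_comm (u := u) (v := v)]
  omega

lemma right_mem_gInterval (u v : V) : v ∈ gInterval G u v := by
  simp [gInterval]

lemma gInterval_subset_left (hc : G.Connected) {u w z : V} (hz : z ∈ gInterval G u w) :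
    gInterval G u z ⊆ gInterval G u w := by
  intro p hp
  have := hc.dist_triangle (u := u) (v := p) (w := w)
  have := hc.dist_triangle (u := p) (v := z) (w := w)
  simp only [gInterval, Set.mem_ofPred_eq] at *
  omega

lemma gInterval_subset_right (hc : G.Connected) {u w z : V} (hz : z ∈ gInterval G u w) :
    gInterval G z w ⊆ gInterval G u w := by
  intro p hp
  have := hc.dist_triangle (u := u) (v := p) (w := w)
  have := hc.dist_triangle (u := u) (v := z) (w := p)
  simp only [gInterval, Set.mem_ofPred_eq] at *
  omega

lemma SimpleGraph.Walk.mem_gInterval_of_mem_support (hc : G.Connected) {u w z : V}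
    (p : G.Walk u w) (hp : p.length = G.dist u w) (hz : z ∈ p.support) :
    z ∈ gInterval G u w := by
  classical
  have hsplit := congrArg Walk.length (p.take_spec hz)
  rw [Walk.length_append] at hsplit
  have := dist_le (p.takeUntil z hz)
  have := dist_le (p.dropUntil z hz)
  have := hc.dist_triangle (u := u) (v := z) (w := w)
  simp only [gInterval, Set.mem_ofPred_eq]
  omega

lemma exists_adj_mem_gInterval (hc : G.Connected) {x v : V} (hxv : x ≠ v) :
    ∃ n, G.Adj x n ∧ n ∈ gInterval G x v := by
  obtain ⟨p, hp⟩ := hc.exists_walk_length_eq_dist x v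
  cases p with
  | nil => exact absurd rfl hxv
  | @cons _ n _ hxn q =>
    refine ⟨n, hxn, ?_⟩
    have := dist_le q
    have := hc.dist_triangle (u := x) (v := n) (w := v)
    simp only [gInterval, Set.mem_ofPred_eq, dist_eq_one_iff_adj.2 hxn, Walk.length_cons] at *
    omega

lemma IsConvexSet.reachable_induce (hc : G.Connected) {H s : Set V} (hH : IsConvexSet G H)
    (hs : H ⊆ s) {u w : V} (hu : u ∈ H) (hw : w ∈ H) :
    (G.induce s).Reachable ⟨u, hs hu⟩ ⟨w, hs hw⟩ := by
  obtain ⟨p, hp⟩ := hc.exists_walk_length_eq_dist u w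
  exact ⟨p.induce s fun z hz => hs (hH u hu w hw (p.mem_gInterval_of_mem_support hc hp hz))⟩

end Interval

section Halfspace

variable {V : Type} {G : SimpleGraph V}

/-- For an edge `ab` of a median graph this is the set `W_ab` of vertices closer to `a` than
to `b`. -/
def halfspace (G : SimpleGraph V) (a b : V) : Set V :=
  {z | G.dist z a + 1 = G.dist z b}

lemma mem_halfspace_iff_mem_gInterval {a b z : V} (hab : G.Adj a b) :
    z ∈ halfspace G a b ↔ a ∈ gInterval G z b := by
  simp only [halfspace, gInterval, Set.mem_ofPred_eq, dist_eq_one_iff_adj.2 hab]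

lemma self_mem_halfspace {a b : V} (hab : G.Adj a b) : a ∈ halfspace G a b := by
  simp [halfspace, dist_eq_one_iff_adj.2 hab]

lemma disjoint_halfspace (a b : V) : Disjoint (halfspace G a b) (halfspace G b a) :=
  Set.disjoint_left.2 fun z h₁ h₂ => by
    simp only [halfspace, Set.mem_ofPred_eq] at h₁ h₂
    omega

lemma gInterval_subset_halfspace (hc : G.Connected) {a b p : V} (hab : G.Adj a b)
    (hp : p ∈ halfspace G a b) : gInterval G p a ⊆ halfspace G a b := by
  intro q hq
  have := hc.dist_triangle (u := p) (v := q) (w := b)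
  have := hc.dist_triangle (u := q) (v := a) (w := b)
  simp only [halfspace, gInterval, Set.mem_ofPred_eq, dist_eq_one_iff_adj.2 hab] at *
  omega

lemma mem_gInterval_of_mem_halfspace (hc : G.Connected) {a b p m : V} (hab : G.Adj a b)
    (hp : p ∈ halfspace G a b) (hm : m ∈ gInterval G p a) : m ∈ gInterval G p b := by
  have := hc.dist_triangle (u := p) (v := m) (w := b)
  have := hc.dist_triangle (u := m) (v := a) (w := b)
  simp only [halfspace, gInterval, Set.mem_ofPred_eq, dist_eq_one_iff_adj.2 hab] at *
  omega

end Halfspace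

namespace IsMedianGraph

variable {V : Type} {G : SimpleGraph V}

lemma mem_halfspace_or (hG : IsMedianGraph G) {a b : V} (hab : G.Adj a b) (z : V) :
    z ∈ halfspace G a b ∨ z ∈ halfspace G b a := by
  obtain ⟨m, ⟨hza, hab', hzb⟩, -⟩ := hG.2 z a b
  have hm : G.dist a m = 0 ∨ G.dist m b = 0 := by
    simp only [gInterval, Set.mem_ofPred_eq, dist_eq_one_iff_adj.2 hab] at hab'
    omega
  rcases hm with hm | hm
  · rw [hG.1.dist_eq_zero_iff] at hm
    subst hm
    exact Or.inl ((mem_halfspace_iff_mem_gInterval hab).2 hzb)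
  · rw [hG.1.dist_eq_zero_iff] at hm
    subst hm
    exact Or.inr ((mem_halfspace_iff_mem_gInterval hab.symm).2 hza)

lemma mem_halfspace_of_adj (hG : IsMedianGraph G) {a b z : V} (hab : G.Adj a b)
    (hza : G.Adj z a) (hzb : z ≠ b) : z ∈ halfspace G a b := by
  refine (hG.mem_halfspace_or hab z).resolve_right fun h => hzb ?_
  simp only [halfspace, Set.mem_ofPred_eq, dist_eq_one_iff_adj.2 hza] at h
  exact hG.1.dist_eq_zero_iff.1 (by omega)

lemma isConvexSet_halfspace (hG : IsMedianGraph G) {a b : V} (hab : G.Adj a b) :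
    IsConvexSet G (halfspace G a b) := by
  have hc := hG.1
  intro u hu w hw z hz
  by_contra hza
  have hzb : z ∈ halfspace G b a := (hG.mem_halfspace_or hab z).resolve_left hza
  -- Both `q` and `m` are the median of `u`, `w`, `b`, but they lie in opposite halfspaces.
  obtain ⟨p, ⟨hup, hzp, hub⟩, -⟩ := hG.2 u z b
  have hpuw : p ∈ gInterval G u w := gInterval_subset_left hc hz hup
  obtain ⟨q, ⟨hpw, hwb, hpb⟩, -⟩ := hG.2 p w b
  have hq : q ∈ halfspace G b a :=
    gInterval_subset_halfspace hc hab.symm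
      (gInterval_subset_halfspace hc hab.symm hzb hzp) hpb
  obtain ⟨m, ⟨huw, hwa, hua⟩, -⟩ := hG.2 u w a
  have hm : m ∈ halfspace G a b := gInterval_subset_halfspace hc hab hu hua
  have hqm : q = m := (hG.2 u w b).unique
    ⟨gInterval_subset_right hc hpuw hpw, hwb, gInterval_subset_right hc hub hpb⟩
    ⟨huw, mem_gInterval_of_mem_halfspace hc hab hw hwa,
      mem_gInterval_of_mem_halfspace hc hab hu hua⟩
  exact Set.disjoint_left.1 (disjoint_halfspace a b) (hqm ▸ hm) hq

end IsMedianGraph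

section Splits

variable {V : Type} {G : SimpleGraph V} {P : Set (Set V)}

lemma IsConvexSplit.nonempty_of_mem (hP : IsConvexSplit G P) {H : Set V} (hH : H ∈ P) :
    H.Nonempty := by
  obtain ⟨A, B, rfl, hA, hB, -⟩ := hP
  rcases hH with rfl | rfl
  exacts [hA, hB]

lemma IsConvexSplit.isConvexSet_of_mem (hP : IsConvexSplit G P) {H : Set V} (hH : H ∈ P) :
    IsConvexSet G H := by
  obtain ⟨A, B, rfl, -, -, hA, hB, -⟩ := hP
  rcases hH with rfl | rfl
  exacts [hA, hB]

lemma IsConvexSplit.exists_notMem (hP : IsConvexSplit G P) (v : V) : ∃ H ∈ P, v ∉ H := by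
  obtain ⟨A, B, rfl, -, -, -, -, -, hD⟩ := hP
  by_cases hvA : v ∈ A
  · exact ⟨B, Set.mem_insert_of_mem _ rfl, Set.disjoint_left.1 hD hvA⟩
  · exact ⟨A, Set.mem_insert _ _, hvA⟩

lemma IsConvexSplit.not_splitsIncompatible_self (hP : IsConvexSplit G P) :
    ¬ SplitsIncompatible P P := by
  obtain ⟨A, B, rfl, -, -, -, -, -, hD⟩ := hP
  intro h
  exact Set.not_nonempty_iff_eq_empty.2 (Set.disjoint_iff_inter_eq_empty.1 hD)
    (h A (Set.mem_insert _ _) B (Set.mem_insert_of_mem _ rfl))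

lemma incGraph_adj_of_splitsIncompatible {P Q : {P : Set (Set V) // IsConvexSplit G P}}
    (h : SplitsIncompatible P.1 Q.1) : (IncGraph G).Adj P Q := by
  refine (fromRel_adj _ _ _).2 ⟨?_, Or.inl h⟩
  rintro rfl
  exact P.2.not_splitsIncompatible_self h

lemma inter_nonempty_of_incGraph_adj {P Q : {P : Set (Set V) // IsConvexSplit G P}}
    (h : (IncGraph G).Adj P Q) {A B : Set V} (hA : A ∈ P.1) (hB : B ∈ Q.1) :
    (A ∩ B).Nonempty := by
  rcases ((fromRel_adj _ _ _).1 h).2 with h | h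
  · exact h A hA B hB
  · exact Set.inter_comm A B ▸ h B hB A hA

end Splits

namespace IsMedianGraph

variable {V : Type} {G : SimpleGraph V}

lemma isConvexSplit_halfspace (hG : IsMedianGraph G) {a b : V} (hab : G.Adj a b) :
    IsConvexSplit G {halfspace G a b, halfspace G b a} :=
  ⟨_, _, rfl, ⟨a, self_mem_halfspace hab⟩, ⟨b, self_mem_halfspace hab.symm⟩,
    hG.isConvexSet_halfspace hab, hG.isConvexSet_halfspace hab.symm,
    Set.eq_univ_of_forall (hG.mem_halfspace_or hab), disjoint_halfspace a b⟩

def edgeSplit (hG : IsMedianGraph G) {a b : V} (hab : G.Adj a b) :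
    {P : Set (Set V) // IsConvexSplit G P} :=
  ⟨{halfspace G a b, halfspace G b a}, hG.isConvexSplit_halfspace hab⟩

lemma edgeSplit_symm (hG : IsMedianGraph G) {a b : V} (hab : G.Adj a b) :
    hG.edgeSplit hab.symm = hG.edgeSplit hab :=
  Subtype.ext (Set.pair_comm _ _)

lemma eq_halfspace_of_isConvexSet (hG : IsMedianGraph G) {A B : Set V}
    (hA : IsConvexSet G A) (hB : IsConvexSet G B) (hU : A ∪ B = Set.univ) (hD : Disjoint A B)
    {a b : V} (ha : a ∈ A) (hb : b ∈ B) (hab : G.Adj a b) : A = halfspace G a b := by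
  ext z
  constructor
  · intro hz
    refine (hG.mem_halfspace_or hab z).resolve_right fun h => ?_
    exact Set.disjoint_left.1 hD
      (hA z hz a ha ((mem_halfspace_iff_mem_gInterval hab.symm).1 h)) hb
  · intro hz
    by_contra hzA
    have hzB : z ∈ B := (hU ▸ Set.mem_univ z : z ∈ A ∪ B).resolve_left hzA
    exact Set.disjoint_left.1 hD ha (hB z hzB b hb ((mem_halfspace_iff_mem_gInterval hab).1 hz))

lemma exists_edgeSplit_eq (hG : IsMedianGraph G) (P : {P : Set (Set V) // IsConvexSplit G P}) :
    ∃ (a b : V) (hab : G.Adj a b), hG.edgeSplit hab = P := by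
  obtain ⟨A, B, hP, ⟨a, ha⟩, ⟨b, hb⟩, hAc, hBc, hU, hD⟩ := P.2
  obtain ⟨p⟩ := hG.1.preconnected a b
  obtain ⟨d, -, hdA, hdA'⟩ :=
    p.exists_boundary_dart A ha fun hbA => Set.disjoint_left.1 hD hbA hb
  have hdB : d.snd ∈ B := (hU ▸ Set.mem_univ d.snd : d.snd ∈ A ∪ B).resolve_left hdA'
  refine ⟨d.fst, d.snd, d.adj, Subtype.ext ?_⟩
  rw [edgeSplit, hP, hG.eq_halfspace_of_isConvexSet hAc hBc hU hD hdA hdB d.adj,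
    hG.eq_halfspace_of_isConvexSet hBc hAc (Set.union_comm A B ▸ hU) hD.symm hdB hdA d.adj.symm]

lemma splitsIncompatible_edgeSplit_of_square (hG : IsMedianGraph G) {x y z w : V}
    (hxy : G.Adj x y) (hxz : G.Adj x z) (hyz : y ≠ z) (hwy : G.Adj w y) (hwz : G.Adj w z)
    (hwx : w ≠ x) : SplitsIncompatible (hG.edgeSplit hxy).1 (hG.edgeSplit hxz).1 := by
  intro A hA B hB
  rcases hA with rfl | rfl <;> rcases hB with rfl | rfl
  · exact ⟨x, self_mem_halfspace hxy, self_mem_halfspace hxz⟩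
  · exact ⟨z, hG.mem_halfspace_of_adj hxy hxz.symm hyz.symm, self_mem_halfspace hxz.symm⟩
  · exact ⟨y, self_mem_halfspace hxy.symm, hG.mem_halfspace_of_adj hxz hxy.symm hyz⟩
  · exact ⟨w, hG.mem_halfspace_of_adj hxy.symm hwy hwx,
      hG.mem_halfspace_of_adj hxz.symm hwz hwx⟩

lemma mem_gInterval_or_of_adj (hG : IsMedianGraph G) {u v : V} (huv : G.Adj u v) (x : V) :
    u ∈ gInterval G x v ∨ v ∈ gInterval G x u :=
  (hG.mem_halfspace_or huv x).imp (mem_halfspace_iff_mem_gInterval huv).1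
    (mem_halfspace_iff_mem_gInterval huv.symm).1

lemma reachable_edgeSplit_of_mem_gInterval (hG : IsMedianGraph G) {x v n₁ n₂ : V}
    (h₁ : G.Adj x n₁) (h₂ : G.Adj x n₂) (hn₁ : n₁ ∈ gInterval G x v)
    (hn₂ : n₂ ∈ gInterval G x v) :
    (IncGraph G).Reachable (hG.edgeSplit h₁) (hG.edgeSplit h₂) := by
  by_cases hn : n₁ = n₂
  · subst hn
    rfl
  obtain ⟨m, ⟨h₁₂, h₂v, h₁v⟩, -⟩ := hG.2 n₁ n₂ v
  have := hG.1.dist_triangle (u := n₁) (v := x) (w := n₂)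
  have := (hG.1.dist_eq_zero_iff (u := n₁) (v := n₂)).not.2 hn
  have := dist_comm (G := G) (u := n₂) (v := m)
  simp only [gInterval, Set.mem_ofPred_eq, dist_eq_one_iff_adj.2 h₁, dist_eq_one_iff_adj.2 h₂,
    dist_eq_one_iff_adj.2 h₁.symm] at *
  have hm₁ : G.Adj m n₁ := dist_eq_one_iff_adj.1 (by rw [dist_comm]; omega)
  have hm₂ : G.Adj m n₂ := dist_eq_one_iff_adj.1 (by omega)
  have hmx : m ≠ x := by
    rintro rfl
    omega
  exact (incGraph_adj_of_splitsIncompatible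
    (hG.splitsIncompatible_edgeSplit_of_square h₁ h₂ hn hm₁ hm₂ hmx)).reachable

lemma reachable_edgeSplit_of_walk_avoiding (hG : IsMedianGraph G) {x : V}
    {u w : ({z | z ≠ x} : Set V)} (p : (G.induce {z | z ≠ x}).Walk u w) {n n' : V}
    (hn : G.Adj x n) (hnu : n ∈ gInterval G x u) (hn' : G.Adj x n')
    (hn'w : n' ∈ gInterval G x w) :
    (IncGraph G).Reachable (hG.edgeSplit hn) (hG.edgeSplit hn') := by
  induction p generalizing n with
  | nil => exact hG.reachable_edgeSplit_of_mem_gInterval hn hn' hnu hn'w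
  | @cons u u₂ _ huu₂ _ ih =>
    obtain ⟨n₂, hxn₂, hn₂⟩ := exists_adj_mem_gInterval hG.1 (Ne.symm u₂.2)
    refine Reachable.trans ?_ (ih hxn₂ hn₂ hn'w)
    rcases hG.mem_gInterval_or_of_adj (induce_adj.1 huu₂) x with h | h
    · exact hG.reachable_edgeSplit_of_mem_gInterval hn hxn₂
        (gInterval_subset_left hG.1 h hnu) hn₂
    · exact hG.reachable_edgeSplit_of_mem_gInterval hn hxn₂ hnu
        (gInterval_subset_left hG.1 h hn₂)

lemma reachable_edgeSplit_of_adj_adj (hG : IsMedianGraph G) (h2 : TwoConnected G) {x y z : V}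
    (hy : G.Adj x y) (hz : G.Adj x z) :
    (IncGraph G).Reachable (hG.edgeSplit hy) (hG.edgeSplit hz) := by
  obtain ⟨p⟩ := (h2.2 x).preconnected ⟨y, hy.ne.symm⟩ ⟨z, hz.ne.symm⟩
  exact hG.reachable_edgeSplit_of_walk_avoiding p hy (right_mem_gInterval x y) hz
    (right_mem_gInterval x z)

lemma reachable_edgeSplit (hG : IsMedianGraph G) (h2 : TwoConnected G) {u v y z : V}
    (p : G.Walk u v) (huy : G.Adj u y) (hvz : G.Adj v z) :
    (IncGraph G).Reachable (hG.edgeSplit huy) (hG.edgeSplit hvz) := by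
  induction p generalizing y with
  | nil => exact hG.reachable_edgeSplit_of_adj_adj h2 huy hvz
  | cons h q ih =>
    refine (hG.reachable_edgeSplit_of_adj_adj h2 huy h).trans ?_
    rw [← hG.edgeSplit_symm h]
    exact ih h.symm hvz

lemma incGraph_connected_of_twoConnected (hG : IsMedianGraph G) (h2 : TwoConnected G) :
    (IncGraph G).Connected := by
  obtain ⟨v⟩ := hG.1.nonempty
  obtain ⟨⟨u, huv⟩⟩ := (h2.2 v).nonempty
  obtain ⟨n, hun, -⟩ := exists_adj_mem_gInterval hG.1 huv
  refine (connected_iff _).2 ⟨fun P Q => ?_, ⟨hG.edgeSplit hun⟩⟩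
  obtain ⟨a, b, hab, rfl⟩ := hG.exists_edgeSplit_eq P
  obtain ⟨c, d, hcd, rfl⟩ := hG.exists_edgeSplit_eq Q
  obtain ⟨p⟩ := hG.1.preconnected a c
  exact hG.reachable_edgeSplit h2 p hab hcd

lemma exists_reachable_of_incGraph_reachable (hG : IsMedianGraph G) {v : V}
    {P Q : {P : Set (Set V) // IsConvexSplit G P}} (hPQ : (IncGraph G).Reachable P Q)
    {H : Set V} (hH : H ∈ P.1) (hvH : v ∉ H) {u : ({z | z ≠ v} : Set V)} (hu : u.1 ∈ H) :
    ∃ H' ∈ Q.1, v ∉ H' ∧ ∃ u' : ({z | z ≠ v} : Set V), u'.1 ∈ H' ∧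
      (G.induce {z | z ≠ v}).Reachable u u' := by
  obtain ⟨p⟩ := hPQ
  induction p generalizing H u with
  | nil => exact ⟨H, hH, hvH, u, hu, .rfl⟩
  | @cons P P₁ _ hadj _ ih =>
    obtain ⟨H₁, hH₁, hvH₁⟩ := P₁.2.exists_notMem v
    obtain ⟨z, hzH, hzH₁⟩ := inter_nonempty_of_incGraph_adj hadj hH hH₁
    have hsub : H ⊆ {z | z ≠ v} := Set.subset_compl_singleton_iff.2 hvH
    obtain ⟨H', hH', hvH', u', hu', hr⟩ := ih hH₁ hvH₁ (u := ⟨z, hsub hzH⟩) hzH₁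
    exact ⟨H', hH', hvH', u', hu',
      ((P.2.isConvexSet_of_mem hH).reachable_induce hG.1 hsub hu hzH).trans hr⟩

lemma preconnected_induce_ne_of_incGraph_preconnected (hG : IsMedianGraph G)
    (hInc : (IncGraph G).Preconnected) (v : V) : (G.induce {z | z ≠ v}).Preconnected := by
  intro x y
  obtain ⟨c, hvc, hcx⟩ := exists_adj_mem_gInterval hG.1 (Ne.symm x.2)
  obtain ⟨c', hvc', hcy⟩ := exists_adj_mem_gInterval hG.1 (Ne.symm y.2)
  rw [gInterval_comm, ← mem_halfspace_iff_mem_gInterval hvc.symm] at hcx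
  rw [gInterval_comm, ← mem_halfspace_iff_mem_gInterval hvc'.symm] at hcy
  have hvW : v ∉ halfspace G c v :=
    Set.disjoint_right.1 (disjoint_halfspace c v) (self_mem_halfspace hvc)
  obtain ⟨H, hH, hvH, u, hu, hxu⟩ := hG.exists_reachable_of_incGraph_reachable
    (hInc (hG.edgeSplit hvc.symm) (hG.edgeSplit hvc'.symm)) (Set.mem_insert _ _) hvW hcx
  obtain rfl : H = halfspace G c' v :=
    hH.resolve_right fun h => hvH (Set.mem_singleton_iff.1 h ▸ self_mem_halfspace hvc')
  exact hxu.trans ((hG.isConvexSet_halfspace hvc'.symm).reachable_induce hG.1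
    (Set.subset_compl_singleton_iff.2 hvH) hu hcy)

lemma twoConnected_of_incGraph_connected (hG : IsMedianGraph G) (hInc : (IncGraph G).Connected) :
    TwoConnected G := by
  refine ⟨hG.1, fun v => (connected_iff _).2
    ⟨hG.preconnected_induce_ne_of_incGraph_preconnected hInc.preconnected v, ?_⟩⟩
  obtain ⟨P⟩ := hInc.nonempty
  obtain ⟨H, hH, hvH⟩ := P.2.exists_notMem v
  obtain ⟨u, hu⟩ := P.2.nonempty_of_mem hH
  exact ⟨⟨u, fun h => hvH (h ▸ hu)⟩⟩

end IsMedianGraph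

theorem median_twoConnected_iff_incGraph_connected_general {V : Type}
    (G : SimpleGraph V) (hG : IsMedianGraph G) :
    TwoConnected G ↔ (IncGraph G).Connected :=
  ⟨hG.incGraph_connected_of_twoConnected, hG.twoConnected_of_incGraph_connected⟩

/-- A median graph with at least three vertices is 2-connected iff the
incompatibility graph of its convex splits is connected. -/
theorem median_twoConnected_iff_incGraph_connected {V : Type}
    (G : SimpleGraph V) (hG : IsMedianGraph G)
    (hcard : ∃ a b c : V, a ≠ b ∧ a ≠ c ∧ b ≠ c) :
    TwoConnected G ↔ (IncGraph G).Connected :=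
  median_twoConnected_iff_incGraph_connected_general G hG
end

section
/- In a median graph G, two convex splits {A1,B1} and {A2,B2} are incompatible if and only if there exists a 4-cycle (x1,x2,x3,x4,x1) of G such that x1 ∈ A1 ∩ A2, x2 ∈ B1 ∩ A2, x3 ∈ B1 ∩ B2, and x4 ∈ A1 ∩ B2. -/
open SimpleGraph

/-- `(A, B)` is a convex split of `G`: a partition of the vertex set into two
nonempty convex sets. -/
def IsConvexSplitPair {V : Type} (G : SimpleGraph V) (A B : Set V) : Prop :=
  A.Nonempty ∧ B.Nonempty ∧ IsConvexSet G A ∧ IsConvexSet G B ∧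
    A ∪ B = Set.univ ∧ Disjoint A B

/-! Proof idea: pick `u ∈ A1 ∩ A2` and `w ∈ B1 ∩ B2` at minimal distance. The median of `u`, `w`
and a vertex of `B1 ∩ A2` lies in `B1 ∩ A2 ∩ I(u, w)`, so the first step `p` of a geodesic from `u`
towards it stays in `A2 ∩ I(u, w)`; by minimality `p ∉ A1`, i.e. `p ∈ B1 ∩ A2`. Symmetrically
`u` has a neighbour `q ∈ A1 ∩ B2` in `I(u, w)`. The median `m` of `p`, `q`, `w` lies in
`B1 ∩ B2` and differs from `p` and `q`, so it is a common neighbour of `p` and `q`; then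
`d(u, m) ≤ 2` and minimality force `m = w`, closing the 4-cycle `u p w q`. -/

namespace SimpleGraph

variable {V : Type} {G : SimpleGraph V}

@[simp]
lemma mem_gInterval {u v z : V} :
    z ∈ gInterval G u v ↔ G.dist u z + G.dist z v = G.dist u v := Iff.rfl

lemma Connected.gInterval_subset (hc : G.Connected) {u v z : V} (hz : z ∈ gInterval G u v) :
    gInterval G u z ⊆ gInterval G u v := by
  intro x hx
  rw [mem_gInterval] at *
  have := hc.dist_triangle (u := u) (v := x) (w := v)
  have := hc.dist_triangle (u := x) (v := z) (w := v)
  omega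

lemma Connected.exists_adj_mem_gInterval (hc : G.Connected) {u v : V} (huv : u ≠ v) :
    ∃ p, G.Adj u p ∧ p ∈ gInterval G u v := by
  obtain ⟨w, hw⟩ := hc.exists_walk_length_eq_dist u v
  cases w with
  | nil => exact absurd rfl huv
  | @cons _ p _ hup rest =>
    refine ⟨p, hup, ?_⟩
    rw [Walk.length_cons] at hw
    have := dist_le rest
    have := dist_eq_one_iff_adj.mpr hup
    have := hc.dist_triangle (u := u) (v := p) (w := v)
    rw [mem_gInterval]
    omega

lemma Connected.adj_adj_of_mem_gInterval (hc : G.Connected) {p q m : V}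
    (hpq : G.dist p q ≤ 2) (hm : m ∈ gInterval G p q) (hmp : m ≠ p) (hmq : m ≠ q) :
    G.Adj p m ∧ G.Adj m q := by
  have := hc.pos_dist_of_ne hmp.symm
  have := hc.pos_dist_of_ne hmq
  rw [mem_gInterval] at hm
  exact ⟨dist_eq_one_iff_adj.mp (by omega), dist_eq_one_iff_adj.mp (by omega)⟩

lemma exists_forall_dist_le {S T : Set V} (hS : S.Nonempty) (hT : T.Nonempty) :
    ∃ u ∈ S, ∃ w ∈ T, ∀ u' ∈ S, ∀ w' ∈ T, G.dist u w ≤ G.dist u' w' := by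
  let f : V × V → ℕ := fun x => G.dist x.1 x.2
  obtain ⟨hu, hw⟩ := Function.argminOn_mem f (S ×ˢ T) (hS.prod hT)
  exact ⟨_, hu, _, hw, fun u' hu' w' hw' =>
    Function.argminOn_le f (S ×ˢ T) (a := (u', w')) ⟨hu', hw'⟩⟩

end SimpleGraph

namespace IsConvexSplitPair

variable {V : Type} {G : SimpleGraph V} {A B : Set V}

lemma isConvexSet_left (h : IsConvexSplitPair G A B) : IsConvexSet G A := h.2.2.1

lemma isConvexSet_right (h : IsConvexSplitPair G A B) : IsConvexSet G B := h.2.2.2.1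

lemma ne_of_mem (h : IsConvexSplitPair G A B) {a b : V} (ha : a ∈ A) (hb : b ∈ B) : a ≠ b := by
  rintro rfl
  exact Set.disjoint_left.mp h.2.2.2.2.2 ha hb

lemma mem_right_of_notMem_left (h : IsConvexSplitPair G A B) {a : V} (ha : a ∉ A) : a ∈ B :=
  ((h.2.2.2.2.1 ▸ Set.mem_univ a : a ∈ A ∪ B)).resolve_left ha

end IsConvexSplitPair

namespace IsMedianGraph

variable {V : Type} {G : SimpleGraph V}

lemma exists_median (hG : IsMedianGraph G) (u v w : V) :
    ∃ m, m ∈ gInterval G u v ∧ m ∈ gInterval G v w ∧ m ∈ gInterval G u w :=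
  (hG.2 u v w).exists

lemma exists_adj_mem_of_forall_dist_le (hG : IsMedianGraph G) {A₁ B₁ A₂ : Set V}
    (h₁ : IsConvexSplitPair G A₁ B₁) (hA₂ : IsConvexSet G A₂) {u v w : V}
    (hu : u ∈ A₁ ∩ A₂) (hv : v ∈ B₁ ∩ A₂) (hw : w ∈ B₁)
    (hmin : ∀ u' ∈ A₁ ∩ A₂, G.dist u w ≤ G.dist u' w) :
    ∃ p, G.Adj u p ∧ p ∈ B₁ ∩ A₂ ∧ p ∈ gInterval G u w := by
  obtain ⟨m, hm_uv, hm_vw, hm_uw⟩ := hG.exists_median u v w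
  have hmA₂ : m ∈ A₂ := hA₂ u hu.2 v hv.2 hm_uv
  have hmB₁ : m ∈ B₁ := h₁.isConvexSet_right v hv.1 w hw hm_vw
  obtain ⟨p, hup, hp_um⟩ := hG.1.exists_adj_mem_gInterval (h₁.ne_of_mem hu.1 hmB₁)
  have hp_uw : p ∈ gInterval G u w := hG.1.gInterval_subset hm_uw hp_um
  have hpA₂ : p ∈ A₂ := hA₂ u hu.2 m hmA₂ hp_um
  have hpA₁ : p ∉ A₁ := fun hpA₁ => by
    have := hmin p ⟨hpA₁, hpA₂⟩
    have := dist_eq_one_iff_adj.mpr hup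
    rw [mem_gInterval] at hp_uw
    omega
  exact ⟨p, hup, ⟨h₁.mem_right_of_notMem_left hpA₁, hpA₂⟩, hp_uw⟩

theorem exists_four_cycle_of_incompatible (hG : IsMedianGraph G) {A₁ B₁ A₂ B₂ : Set V} {t v : V}
    (h₁ : IsConvexSplitPair G A₁ B₁) (h₂ : IsConvexSplitPair G A₂ B₂)
    (hAA : (A₁ ∩ A₂).Nonempty) (ht : t ∈ A₁ ∩ B₂) (hv : v ∈ B₁ ∩ A₂)
    (hBB : (B₁ ∩ B₂).Nonempty) :
    ∃ x₁ x₂ x₃ x₄ : V, G.Adj x₁ x₂ ∧ G.Adj x₂ x₃ ∧ G.Adj x₃ x₄ ∧ G.Adj x₄ x₁ ∧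
      x₁ ∈ A₁ ∩ A₂ ∧ x₂ ∈ B₁ ∩ A₂ ∧ x₃ ∈ B₁ ∩ B₂ ∧ x₄ ∈ A₁ ∩ B₂ := by
  obtain ⟨u, hu, w, hw, hmin⟩ := exists_forall_dist_le (G := G) hAA hBB
  obtain ⟨p, hup, hp, hp_uw⟩ := hG.exists_adj_mem_of_forall_dist_le h₁ h₂.isConvexSet_left hu
    hv hw.1 fun u' hu' => hmin u' hu' w hw
  obtain ⟨q, huq, hq, -⟩ := hG.exists_adj_mem_of_forall_dist_le h₂ h₁.isConvexSet_left
    ⟨hu.2, hu.1⟩ ⟨ht.2, ht.1⟩ hw.2 fun u' hu' => hmin u' ⟨hu'.2, hu'.1⟩ w hw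
  obtain ⟨m, hm_pq, hm_qw, hm_pw⟩ := hG.exists_median p q w
  have hm : m ∈ B₁ ∩ B₂ := ⟨h₁.isConvexSet_right p hp.1 w hw.1 hm_pw,
    h₂.isConvexSet_right q hq.1 w hw.2 hm_qw⟩
  have hd_pq : G.dist p q ≤ 2 := by
    have := hG.1.dist_triangle (u := p) (v := u) (w := q)
    rwa [dist_eq_one_iff_adj.mpr hup.symm, dist_eq_one_iff_adj.mpr huq] at this
  obtain ⟨hpm, hmq⟩ := hG.1.adj_adj_of_mem_gInterval hd_pq hm_pq
    (h₂.ne_of_mem hp.2 hm.2).symm (h₁.ne_of_mem hq.2 hm.1).symm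
  have hmw : m = w := by
    have := hmin u hu m hm
    have := dist_eq_one_iff_adj.mpr hup
    have := hG.1.dist_triangle (u := u) (v := p) (w := m)
    have := dist_eq_one_iff_adj.mpr hpm
    rw [mem_gInterval] at hp_uw hm_pw
    exact hG.1.dist_eq_zero_iff.mp (by omega)
  subst hmw
  exact ⟨u, p, m, q, hup, hpm, hmq, huq.symm, hu, ⟨hp.1, hp.2⟩, hm, ⟨hq.2, hq.1⟩⟩

end IsMedianGraph

/-- In a median graph, two convex splits `{A1, B1}` and `{A2, B2}` are
incompatible iff there is a 4-cycle `(x1, x2, x3, x4, x1)` with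
`x1 ∈ A1 ∩ A2`, `x2 ∈ B1 ∩ A2`, `x3 ∈ B1 ∩ B2` and `x4 ∈ A1 ∩ B2`. -/
theorem incompatible_iff_four_cycle {V : Type} (G : SimpleGraph V)
    (hG : IsMedianGraph G) (A1 B1 A2 B2 : Set V)
    (h1 : IsConvexSplitPair G A1 B1) (h2 : IsConvexSplitPair G A2 B2) :
    ((A1 ∩ A2).Nonempty ∧ (A1 ∩ B2).Nonempty ∧ (B1 ∩ A2).Nonempty ∧
        (B1 ∩ B2).Nonempty) ↔
      ∃ x1 x2 x3 x4 : V, G.Adj x1 x2 ∧ G.Adj x2 x3 ∧ G.Adj x3 x4 ∧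
        G.Adj x4 x1 ∧ x1 ∈ A1 ∩ A2 ∧ x2 ∈ B1 ∩ A2 ∧ x3 ∈ B1 ∩ B2 ∧
        x4 ∈ A1 ∩ B2 := by
  constructor
  · rintro ⟨hAA, ⟨t, ht⟩, ⟨v, hv⟩, hBB⟩
    exact hG.exists_four_cycle_of_incompatible h1 h2 hAA ht hv hBB
  · rintro ⟨x1, x2, x3, x4, -, -, -, -, h1, h2, h3, h4⟩
    exact ⟨⟨x1, h1⟩, ⟨x4, h4⟩, ⟨x2, h2⟩, ⟨x3, h3⟩⟩
end

section
/- For every finite graph F, the map sending an automorphism f of F to the permutation of cliques K ↦ f(K) is an injective group homomorphism from the automorphism group of F into the automorphism group of the simplex graph κ(F), and its image is exactly the stabilizer in Aut(κ(F)) of the vertex of κ(F) corresponding to the empty clique. -/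
open SimpleGraph

/-- The simplex graph `κ(F)` of a graph `F`: vertices are the cliques of `F`
(including the empty clique), two cliques being adjacent iff one is obtained
from the other by adding a single vertex. -/
def simplexGraph {α : Type} (F : SimpleGraph α) :
    SimpleGraph {s : Finset α // F.IsClique (s : Set α)} :=
  SimpleGraph.fromRel (fun s t =>
    ∃ a : α, a ∉ s.1 ∧ (t.1 : Set α) = insert a (s.1 : Set α))

/-- The automorphism group of a graph `G`, as the subgroup of permutations of
the vertex set preserving adjacency and non-adjacency. -/
def autGroup {V : Type} (G : SimpleGraph V) : Subgroup (Equiv.Perm V) where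
  carrier := {f | ∀ u v : V, G.Adj (f u) (f v) ↔ G.Adj u v}
  one_mem' := fun u v => Iff.rfl
  mul_mem' := by
    intro a b ha hb u v
    simp only [Equiv.Perm.mul_apply]
    exact (ha _ _).trans (hb _ _)
  inv_mem' := by
    intro a ha u v
    simpa using (ha (a⁻¹ u) (a⁻¹ v)).symm

/-- The empty clique, as a vertex of the simplex graph. -/
def emptyClique {α : Type} (F : SimpleGraph α) :
    {s : Finset α // F.IsClique (s : Set α)} :=
  ⟨∅, by simp⟩


/-! An automorphism `g` of `κ(F)` fixing `∅` preserves the size of cliques: along an edge the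
size grows by at most one, which bounds `|g K|` by `|K|` inductively, and `g⁻¹` gives the reverse
bound. So `g` permutes the singletons, inducing a vertex map `f`. Since of two adjacent cliques the
larger contains the smaller, `f(K) ⊆ g(K)` by induction, with equality by counting. Finally `f` is
an automorphism of `F` because `g` and `g⁻¹` map cliques, in particular the edges `{a, b}`, to
cliques. -/

open Finset

theorem Finset.image_covBy_image_iff {α β : Type*} [DecidableEq α] [DecidableEq β]
    {f : α → β} (hf : Function.Injective f) {s t : Finset α} : s.image f ⋖ t.image f ↔ s ⋖ t := by
  rw [covBy_iff_card_sdiff_eq_one, covBy_iff_card_sdiff_eq_one, ← image_sdiff _ _ hf,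
    card_image_of_injective _ hf, image_subset_image_iff hf]

lemma SimpleGraph.isClique_image_iff {α : Type*} [DecidableEq α] {F : SimpleGraph α}
    {f : α → α} (hf : Function.Injective f) (hadj : ∀ u v, F.Adj (f u) (f v) ↔ F.Adj u v)
    (s : Finset α) : F.IsClique (s.image f : Set α) ↔ F.IsClique (s : Set α) := by
  have hon : Function.onFun F.Adj f = F.Adj := funext₂ fun u v => propext (hadj u v)
  rw [coe_image, IsClique, hf.injOn.pairwise_image, hon, IsClique]

lemma mem_autGroup_iff_isClique_image {α : Type} [DecidableEq α] {F : SimpleGraph α}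
    {f : Equiv.Perm α} :
    f ∈ autGroup F ↔
      ∀ s : Finset α, F.IsClique (s.image f : Set α) ↔ F.IsClique (s : Set α) := by
  refine ⟨fun hf => isClique_image_iff f.injective hf, fun h u v => ?_⟩
  have hpair := h {u, v}
  rw [image_insert, image_singleton, coe_pair, coe_pair, isClique_pair, isClique_pair,
    f.injective.ne_iff] at hpair
  by_cases huv : u = v
  · simp [huv]
  · exact ⟨fun hf => hpair.1 (fun _ => hf) huv, fun hf => hpair.2 (fun _ => hf) huv⟩

variable {α : Type} {F : SimpleGraph α}

abbrev Cliques (F : SimpleGraph α) := {s : Finset α // F.IsClique (s : Set α)}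

def singletonClique (F : SimpleGraph α) (a : α) : Cliques F :=
  ⟨{a}, by simp⟩

lemma injective_of_apply_singletonClique {g : Equiv.Perm (Cliques F)} {f : α → α}
    (hf : ∀ a, g (singletonClique F a) = singletonClique F (f a)) : Function.Injective f :=
  fun a b hab => by
    have := g.injective ((hf a).trans ((congrArg _ hab).trans (hf b).symm))
    simpa [singletonClique] using congrArg Subtype.val this

variable [DecidableEq α]

lemma simplexGraph_adj_iff {s t : Cliques F} :
    (simplexGraph F).Adj s t ↔ s.1 ⋖ t.1 ∨ t.1 ⋖ s.1 := by
  simp only [simplexGraph, fromRel_adj, ← coe_insert, coe_inj, covBy_iff_exists_insert, eq_comm]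
  refine ⟨And.right, fun h => ⟨?_, h⟩⟩
  rintro rfl
  obtain ⟨a, ha, h⟩ | ⟨a, ha, h⟩ := h <;> exact ha (h ▸ mem_insert_self a _)

lemma card_le_card_add_one_of_simplexGraph_adj {s t : Cliques F} (h : (simplexGraph F).Adj s t) :
    #t.1 ≤ #s.1 + 1 := by
  rcases simplexGraph_adj_iff.1 h with hst | hts
  · exact (Nat.covBy_iff_add_one_eq.1 hst.card_finset).ge
  · exact (card_lt_card hts.lt).le.trans (Nat.le_succ _)

lemma subset_of_simplexGraph_adj_of_card_lt {s t : Cliques F} (h : (simplexGraph F).Adj s t)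
    (hst : #s.1 < #t.1) : s.1 ⊆ t.1 := by
  rcases simplexGraph_adj_iff.1 h with h | h
  · exact h.le
  · exact absurd (card_lt_card h.lt) hst.not_gt

def Cliques.erase (K : Cliques F) (a : α) : Cliques F :=
  ⟨K.1.erase a, K.2.subset (coe_subset.2 (erase_subset a K.1))⟩

@[simp]
lemma Cliques.coe_erase (K : Cliques F) (a : α) : (K.erase a).1 = K.1.erase a := rfl

lemma Cliques.simplexGraph_adj_erase {K : Cliques F} {a : α} (ha : a ∈ K.1) :
    (simplexGraph F).Adj (K.erase a) K :=
  simplexGraph_adj_iff.2 (Or.inl (erase_covBy ha))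

def cliquePerm (f : autGroup F) : Equiv.Perm (Cliques F) :=
  Equiv.Perm.subtypePerm (Equiv.finsetCongr (f : Equiv.Perm α)) fun s => by
    rw [Equiv.finsetCongr_apply, map_eq_image]
    exact isClique_image_iff (f : Equiv.Perm α).injective f.2 s

@[simp]
lemma coe_cliquePerm_apply (f : autGroup F) (K : Cliques F) :
    (cliquePerm f K : Finset α) = K.1.image (f : Equiv.Perm α) := by
  simp [cliquePerm, map_eq_image]

lemma cliquePerm_mem_autGroup (f : autGroup F) : cliquePerm f ∈ autGroup (simplexGraph F) := by
  intro K L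
  simp only [simplexGraph_adj_iff, coe_cliquePerm_apply,
    image_covBy_image_iff (f : Equiv.Perm α).injective]

def cliqueHom (F : SimpleGraph α) : autGroup F →* autGroup (simplexGraph F) where
  toFun f := ⟨cliquePerm f, cliquePerm_mem_autGroup f⟩
  map_one' := by ext K : 3; simp
  map_mul' f g := by ext K : 3; simp [image_image]

@[simp]
lemma coe_cliqueHom_apply (f : autGroup F) (K : Cliques F) :
    ((cliqueHom F f : Equiv.Perm (Cliques F)) K : Finset α) = K.1.image (f : Equiv.Perm α) :=
  coe_cliquePerm_apply f K

lemma cliqueHom_injective : Function.Injective (cliqueHom F) := by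
  intro f g hfg
  ext a
  simpa [singletonClique] using congrArg (fun φ : autGroup (simplexGraph F) =>
    ((φ : Equiv.Perm (Cliques F)) (singletonClique F a) : Finset α)) hfg

namespace simplexGraph

variable {g : Equiv.Perm (Cliques F)} (hg : g ∈ autGroup (simplexGraph F))
  (h0 : g (emptyClique F) = emptyClique F)
include hg h0

lemma card_apply_le (K : Cliques F) : #(g K).1 ≤ #K.1 := by
  induction hK : #K.1 generalizing K with
  | zero =>
    obtain rfl : K = emptyClique F := Subtype.ext (card_eq_zero.1 hK)
    rw [h0]
    simp [emptyClique]
  | succ n ih =>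
    obtain ⟨a, ha⟩ : K.1.Nonempty := card_pos.1 (by omega)
    have hcard : #(K.erase a).1 = n := by simp [card_erase_of_mem ha, hK]
    calc #(g K).1 ≤ #(g (K.erase a)).1 + 1 :=
          card_le_card_add_one_of_simplexGraph_adj
            ((hg _ _).2 (Cliques.simplexGraph_adj_erase ha))
      _ ≤ n + 1 := by gcongr; exact ih _ hcard

lemma card_apply (K : Cliques F) : #(g K).1 = #K.1 := by
  refine (card_apply_le hg h0 K).antisymm ?_
  have h0' : g⁻¹ (emptyClique F) = emptyClique F := by rw [Equiv.Perm.inv_eq_iff_eq, h0]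
  simpa using card_apply_le ((autGroup _).inv_mem hg) h0' (g K)

lemma exists_apply_singletonClique :
    ∃ f : α → α, ∀ a, g (singletonClique F a) = singletonClique F (f a) := by
  have : ∀ a, ∃ b, (g (singletonClique F a)).1 = {b} := fun a =>
    card_eq_one.1 (by simp [card_apply hg h0, singletonClique])
  choose f hf using this
  exact ⟨f, fun a => Subtype.ext (hf a)⟩

section VertexMap

variable {f : α → α} (hf : ∀ a, g (singletonClique F a) = singletonClique F (f a))
include hf

lemma mem_apply_of_mem {K : Cliques F} {x : α} (hx : x ∈ K.1) : f x ∈ (g K).1 := by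
  induction hK : #K.1 generalizing K with
  | zero => simp [card_eq_zero.1 hK] at hx
  | succ n ih =>
    rcases K.1.eq_singleton_or_nontrivial hx with hKx | hK_nontrivial
    · rw [show K = singletonClique F x from Subtype.ext hKx, hf x]
      exact mem_singleton_self (f x)
    · obtain ⟨y, hy, hyx⟩ := hK_nontrivial.exists_ne x
      have hadj := (hg _ _).2 (Cliques.simplexGraph_adj_erase hy)
      refine subset_of_simplexGraph_adj_of_card_lt hadj ?_ (ih (mem_erase.2 ⟨hyx.symm, hx⟩) ?_)
      · simp [card_apply hg h0, card_erase_of_mem hy, hK]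
      · simp [card_erase_of_mem hy, hK]

lemma apply_eq_image (K : Cliques F) : (g K).1 = K.1.image f := by
  have hsub : K.1.image f ⊆ (g K).1 := image_subset_iff.2 fun _ hx => mem_apply_of_mem hg h0 hf hx
  refine (eq_of_subset_of_card_le hsub ?_).symm
  rw [card_apply hg h0, card_image_of_injective _ (injective_of_apply_singletonClique hf)]

end VertexMap

lemma exists_mem_autGroup_apply_eq_image :
    ∃ e ∈ autGroup F, ∀ K : Cliques F, (g K).1 = K.1.image e := by
  obtain ⟨f, hf⟩ := exists_apply_singletonClique hg h0
  have hgf := apply_eq_image hg h0 hf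
  have hinj := injective_of_apply_singletonClique hf
  have hsurj : Function.Surjective f := fun b => by
    have hb : b ∈ (g (g⁻¹ (singletonClique F b))).1 := by simp [singletonClique]
    obtain ⟨a, -, rfl⟩ := mem_image.1 (hgf _ ▸ hb)
    exact ⟨a, rfl⟩
  refine ⟨Equiv.ofBijective f ⟨hinj, hsurj⟩,
    mem_autGroup_iff_isClique_image.2 fun s => ?_, hgf⟩
  refine ⟨fun hs => ?_, fun hs => hgf ⟨s, hs⟩ ▸ (g ⟨s, hs⟩).2⟩
  set L := g⁻¹ ⟨s.image f, hs⟩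
  have hL : L.1.image f = s.image f := by rw [← hgf L]; simp [L]
  exact image_injective hinj hL ▸ L.2

end simplexGraph

theorem aut_simplexGraph_of_aut_general {α : Type} [DecidableEq α]
    (F : SimpleGraph α) :
    ∃ φ : autGroup F →* autGroup (simplexGraph F),
      Function.Injective φ ∧
      (∀ (f : autGroup F) (K : {s : Finset α // F.IsClique (s : Set α)}),
        (((φ f : Equiv.Perm {s : Finset α // F.IsClique (s : Set α)}) K) :
            Finset α) = K.1.image (f : Equiv.Perm α)) ∧
      (∀ g : autGroup (simplexGraph F),
        g ∈ φ.range ↔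
          (g : Equiv.Perm {s : Finset α // F.IsClique (s : Set α)})
            (emptyClique F) = emptyClique F) := by
  refine ⟨cliqueHom F, cliqueHom_injective, coe_cliqueHom_apply,
    fun g => ⟨?_, fun h0 => ?_⟩⟩
  · rintro ⟨f, rfl⟩
    exact Subtype.ext (by simp [emptyClique])
  · obtain ⟨e, he, hge⟩ := simplexGraph.exists_mem_autGroup_apply_eq_image g.2 h0
    exact ⟨⟨e, he⟩, by ext K : 3; simp [hge]⟩

/-- For every finite graph `F`, the map sending an automorphism `f` of `F` to
the permutation of cliques `K ↦ f(K)` is an injective group homomorphism from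
`Aut F` into `Aut κ(F)` whose image is exactly the stabilizer of the vertex of
`κ(F)` corresponding to the empty clique. -/
theorem aut_simplexGraph_of_aut {α : Type} [Fintype α] [DecidableEq α]
    (F : SimpleGraph α) :
    ∃ φ : autGroup F →* autGroup (simplexGraph F),
      Function.Injective φ ∧
      (∀ (f : autGroup F) (K : {s : Finset α // F.IsClique (s : Set α)}),
        (((φ f : Equiv.Perm {s : Finset α // F.IsClique (s : Set α)}) K) :
            Finset α) = K.1.image (f : Equiv.Perm α)) ∧
      (∀ g : autGroup (simplexGraph F),
        g ∈ φ.range ↔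
          (g : Equiv.Perm {s : Finset α // F.IsClique (s : Set α)})
            (emptyClique F) = emptyClique F) :=
  aut_simplexGraph_of_aut_general F
end
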